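/- Let (c₁,B₁),…,(cₘ,Bₘ) be a Brascamp–Lieb datum on ℝⁿ with Σᵢ cᵢ nᵢ = n and with ⋂ᵢ ker(Bᵢ) = {0}. Suppose C is a finite constant such that ∫_{ℝⁿ} ∏ᵢ (fᵢ(Bᵢx))^{cᵢ} dx ≤ C ∏ᵢ (∫_{ℝ^{nᵢ}} fᵢ dx)^{cᵢ} for all nonnegative integrable fᵢ. Then for every collection of positive definite matrices Aᵢ on ℝ^{nᵢ}, ∏ᵢ det(Aᵢ)^{cᵢ} ≤ C² det(Σᵢ cᵢ Bᵢ* Aᵢ Bᵢ). -/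

import Mathlib

/-!
Feeding the centred Gaussians `fᵢ(y) = exp(-⟨Aᵢy, y⟩/2)` into the Brascamp–Lieb inequality turns
the integrand on the left into the Gaussian `exp(-⟨Qx, x⟩/2)` with `Q = ∑ cᵢ Bᵢᵀ Aᵢ Bᵢ`, which is
positive definite because the kernels of the `Bᵢ` meet only in `0`. Writing a positive definite
matrix as `SᵀS` and substituting `y = Sx`, every Gaussian integral equals `(2π)^{k/2} / √det`.
The scaling condition `∑ cᵢ nᵢ = n` makes the powers of `2π` on both sides cancel, leaving
`√(∏ det Aᵢ^{cᵢ}) ≤ C √det Q`, which is the claim after squaring.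
-/

open MeasureTheory Matrix Real

section GaussianIntegral

variable {ι : Type*} [Fintype ι]

lemma exp_neg_dotProduct_self_div_two_eq_prod (x : ι → ℝ) :
    exp (-(x ⬝ᵥ x) / 2) = ∏ i, exp (-(1 / 2) * x i ^ 2) := by
  rw [← exp_sum, dotProduct, neg_div, Finset.sum_div, ← Finset.sum_neg_distrib]
  congr 1
  exact Finset.sum_congr rfl fun i _ => by ring

lemma integrable_exp_neg_dotProduct_self_div_two :
    Integrable fun x : ι → ℝ => exp (-(x ⬝ᵥ x) / 2) := by
  simp only [exp_neg_dotProduct_self_div_two_eq_prod]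
  exact Integrable.fintype_prod fun _ => integrable_exp_neg_mul_sq (by norm_num)

lemma integral_exp_neg_dotProduct_self_div_two :
    ∫ x : ι → ℝ, exp (-(x ⬝ᵥ x) / 2) = (2 * π) ^ (Fintype.card ι / 2 : ℝ) := by
  simp only [exp_neg_dotProduct_self_div_two_eq_prod]
  rw [integral_fintype_prod_volume_eq_pow (fun t : ℝ => exp (-(1 / 2) * t ^ 2)),
    integral_gaussian, sqrt_eq_rpow, ← rpow_natCast, ← rpow_mul (by positivity)]
  congr 1 <;> ring

end GaussianIntegral

namespace Matrix

variable {ι : Type*} [Fintype ι]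

lemma dotProduct_transpose_mul_self_mulVec {m : Type*} [Fintype m] (T : Matrix m ι ℝ)
    (x : ι → ℝ) : x ⬝ᵥ (Tᵀ * T) *ᵥ x = T *ᵥ x ⬝ᵥ T *ᵥ x := by
  rw [← mulVec_mulVec, dotProduct_mulVec, vecMul_transpose]

variable [DecidableEq ι] {S : Matrix ι ι ℝ}
  {F : Type*} [NormedAddCommGroup F]

lemma map_mulVec_volume (hS : S.det ≠ 0) :
    Measure.map (S *ᵥ ·) volume = ENNReal.ofReal |S.det⁻¹| • volume := by
  have := Measure.map_linearMap_addHaar_pi_eq_smul_addHaar (f := toLin' S)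
    (by rwa [LinearMap.det_toLin']) volume
  rwa [LinearMap.det_toLin'] at this

lemma measurableEmbedding_mulVec (hS : S.det ≠ 0) : MeasurableEmbedding (S *ᵥ ·) :=
  ((toLin' S).equivOfDetNeZero (by rwa [LinearMap.det_toLin'])).toContinuousLinearEquiv
    |>.toHomeomorph.measurableEmbedding

lemma integrable_comp_mulVec_iff (hS : S.det ≠ 0) {g : (ι → ℝ) → F} :
    Integrable (fun x => g (S *ᵥ x)) ↔ Integrable g := by
  calc Integrable (fun x => g (S *ᵥ x)) volume ↔ Integrable g (Measure.map (S *ᵥ ·) volume) :=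
        ((measurableEmbedding_mulVec hS).integrable_map_iff (μ := volume) (g := g)).symm
    _ ↔ Integrable g volume := by
        rw [map_mulVec_volume hS]
        exact integrable_smul_measure (ENNReal.ofReal_pos.2 (abs_pos.2 (inv_ne_zero hS))).ne'
          ENNReal.ofReal_ne_top

lemma integral_comp_mulVec [NormedSpace ℝ F] (hS : S.det ≠ 0) (g : (ι → ℝ) → F) :
    ∫ x, g (S *ᵥ x) = |S.det|⁻¹ • ∫ y, g y := by
  rw [← (measurableEmbedding_mulVec hS).integral_map, map_mulVec_volume hS,
    integral_smul_measure, ENNReal.toReal_ofReal (abs_nonneg _), abs_inv]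

lemma integrable_exp_neg_dotProduct_transpose_mul_self_mulVec (hS : S.det ≠ 0) :
    Integrable fun x => exp (-(x ⬝ᵥ (Sᵀ * S) *ᵥ x) / 2) := by
  simp only [dotProduct_transpose_mul_self_mulVec]
  exact (integrable_comp_mulVec_iff hS).2 integrable_exp_neg_dotProduct_self_div_two

lemma integral_exp_neg_dotProduct_transpose_mul_self_mulVec (hS : S.det ≠ 0) :
    ∫ x, exp (-(x ⬝ᵥ (Sᵀ * S) *ᵥ x) / 2) = (2 * π) ^ (Fintype.card ι / 2 : ℝ) / |S.det| := by
  simp only [dotProduct_transpose_mul_self_mulVec]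
  rw [integral_comp_mulVec hS (fun y => exp (-(y ⬝ᵥ y) / 2)),
    integral_exp_neg_dotProduct_self_div_two, smul_eq_mul, inv_mul_eq_div]

lemma PosDef.exists_eq_transpose_mul_self {Q : Matrix ι ι ℝ} (hQ : Q.PosDef) :
    ∃ S : Matrix ι ι ℝ, S.det ≠ 0 ∧ Q = Sᵀ * S := by
  open scoped MatrixOrder in
  obtain ⟨S, rfl⟩ := CStarAlgebra.nonneg_iff_eq_star_mul_self.mp hQ.posSemidef.nonneg
  refine ⟨S, fun hS => hQ.det_pos.ne' ?_, by
    rw [star_eq_conjTranspose, conjTranspose_eq_transpose_of_trivial]⟩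
  rw [det_mul, hS, mul_zero]

lemma PosDef.integrable_exp_neg_dotProduct_mulVec {Q : Matrix ι ι ℝ} (hQ : Q.PosDef) :
    Integrable fun x => exp (-(x ⬝ᵥ Q *ᵥ x) / 2) := by
  obtain ⟨S, hS, rfl⟩ := hQ.exists_eq_transpose_mul_self
  exact integrable_exp_neg_dotProduct_transpose_mul_self_mulVec hS

lemma PosDef.integral_exp_neg_dotProduct_mulVec {Q : Matrix ι ι ℝ} (hQ : Q.PosDef) :
    ∫ x, exp (-(x ⬝ᵥ Q *ᵥ x) / 2) = (2 * π) ^ (Fintype.card ι / 2 : ℝ) / √Q.det := by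
  obtain ⟨S, hS, rfl⟩ := hQ.exists_eq_transpose_mul_self
  rw [integral_exp_neg_dotProduct_transpose_mul_self_mulVec hS, det_mul, det_transpose,
    ← sq, sqrt_sq_eq_abs]

end Matrix

lemma prod_rpow_rpow_div_sqrt {ι : Type*} [Fintype ι] {P N : ℝ} (hP : 0 < P) {c k d : ι → ℝ}
    (hd : ∀ i, 0 ≤ d i) (hN : ∑ i, c i * k i = N) :
    ∏ i, (P ^ (k i / 2) / √(d i)) ^ c i = P ^ (N / 2) / √(∏ i, d i ^ c i) := by
  simp only [div_rpow (rpow_nonneg hP.le _) (sqrt_nonneg _)]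
  rw [Finset.prod_div_distrib, sqrt_prod _ fun i _ => rpow_nonneg (hd i) _]
  congr 1
  · simp only [← rpow_mul hP.le]
    rw [← rpow_sum_of_pos hP, ← hN, Finset.sum_div]
    exact congrArg _ (Finset.sum_congr rfl fun i _ => by ring)
  · refine Finset.prod_congr rfl fun i _ => ?_
    rw [sqrt_eq_rpow, sqrt_eq_rpow, ← rpow_mul (hd i), ← rpow_mul (hd i), mul_comm]

lemma le_sq_mul_of_div_sqrt_le_mul_div_sqrt {P p q C : ℝ} (hP : 0 < P) (hp : 0 < p) (hq : 0 < q)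
    (h : P / √q ≤ C * (P / √p)) : p ≤ C ^ 2 * q := by
  have hsqrt : √p ≤ C * √q := by
    rw [mul_div_assoc', div_le_div_iff₀ (sqrt_pos.2 hq) (sqrt_pos.2 hp)] at h
    exact le_of_mul_le_mul_left (by linarith) hP
  calc p = √p ^ 2 := (sq_sqrt hp.le).symm
    _ ≤ (C * √q) ^ 2 := pow_le_pow_left₀ (sqrt_nonneg _) hsqrt 2
    _ = C ^ 2 * q := by rw [mul_pow, sq_sqrt hq.le]

section BrascampLieb

variable {ι n : Type*} [Fintype ι] [Fintype n] {κ : ι → Type*} [∀ i, Fintype (κ i)]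
  (c : ι → ℝ) (B : ∀ i, Matrix (κ i) n ℝ) (A : ∀ i, Matrix (κ i) (κ i) ℝ)

lemma dotProduct_sum_smul_transpose_mul_mul_mulVec (x : n → ℝ) :
    x ⬝ᵥ (∑ i, c i • ((B i)ᵀ * A i * B i)) *ᵥ x = ∑ i, c i * (B i *ᵥ x ⬝ᵥ A i *ᵥ (B i *ᵥ x)) := by
  rw [sum_mulVec, dotProduct_sum]
  refine Finset.sum_congr rfl fun i _ => ?_
  rw [smul_mulVec, dotProduct_smul, smul_eq_mul, ← mulVec_mulVec, ← mulVec_mulVec,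
    dotProduct_mulVec x (B i)ᵀ, vecMul_transpose]

lemma prod_rpow_exp_neg_dotProduct_mulVec (x : n → ℝ) :
    ∏ i, exp (-(B i *ᵥ x ⬝ᵥ A i *ᵥ (B i *ᵥ x)) / 2) ^ c i =
      exp (-(x ⬝ᵥ (∑ i, c i • ((B i)ᵀ * A i * B i)) *ᵥ x) / 2) := by
  simp only [← exp_mul, ← exp_sum, dotProduct_sum_smul_transpose_mul_mul_mulVec]
  rw [← Finset.sum_neg_distrib, Finset.sum_div]
  exact congrArg exp (Finset.sum_congr rfl fun i _ => by ring)

variable {c B A} in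
lemma posDef_sum_smul_transpose_mul_mul (hc : ∀ i, 0 < c i)
    (hker : ∀ x, (∀ i, B i *ᵥ x = 0) → x = 0) (hA : ∀ i, (A i).PosDef) :
    (∑ i, c i • ((B i)ᵀ * A i * B i)).PosDef := by
  have hsemi : (∑ i, c i • ((B i)ᵀ * A i * B i)).PosSemidef :=
    posSemidef_sum _ fun i _ => ((hA i).posSemidef.conjTranspose_mul_mul_same (B i)).smul (hc i).le
  refine PosDef.of_dotProduct_mulVec_pos hsemi.isHermitian fun x hx => ?_
  obtain ⟨j, hj⟩ : ∃ j, B j *ᵥ x ≠ 0 := by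
    by_contra! h
    exact hx (hker x h)
  have hterm : ∀ i, B i *ᵥ x ≠ 0 → 0 < c i * (B i *ᵥ x ⬝ᵥ A i *ᵥ (B i *ᵥ x)) := fun i hi =>
    mul_pos (hc i) (by simpa using (hA i).dotProduct_mulVec_pos hi)
  rw [star_trivial, dotProduct_sum_smul_transpose_mul_mul_mulVec]
  refine Finset.sum_pos' (fun i _ => ?_) ⟨j, Finset.mem_univ j, hterm j hj⟩
  rcases eq_or_ne (B i *ᵥ x) 0 with h | h
  · simp [h]
  · exact (hterm i h).le

end BrascampLieb

theorem gaussian_brascamp_lieb_of_brascamp_lieb_general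
    (m n : ℕ) (ni : Fin m → ℕ) (c : Fin m → ℝ) (hc : ∀ i, 0 < c i)
    (B : ∀ i, Matrix (Fin (ni i)) (Fin n) ℝ)
    (hdim : ∑ i, c i * (ni i : ℝ) = (n : ℝ))
    (hker : ∀ x : Fin n → ℝ, (∀ i, (B i).mulVec x = 0) → x = 0)
    (C : ℝ)
    (hC : ∀ f : ∀ i, (Fin (ni i) → ℝ) → ℝ,
      (∀ i x, 0 ≤ f i x) → (∀ i, Integrable (f i)) →
      ∫ x : Fin n → ℝ, ∏ i, (f i ((B i).mulVec x)) ^ (c i) ≤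
        C * ∏ i, (∫ y : Fin (ni i) → ℝ, f i y) ^ (c i))
    (Ai : ∀ i, Matrix (Fin (ni i)) (Fin (ni i)) ℝ) (hAi : ∀ i, (Ai i).PosDef) :
    ∏ i, (Ai i).det ^ (c i) ≤ C ^ 2 * (∑ i, c i • ((B i)ᵀ * Ai i * B i)).det := by
  have hQ := posDef_sum_smul_transpose_mul_mul hc hker hAi
  have hBL := hC (fun i y => exp (-(y ⬝ᵥ Ai i *ᵥ y) / 2)) (fun _ _ => (exp_pos _).le)
    fun i => (hAi i).integrable_exp_neg_dotProduct_mulVec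
  simp only [prod_rpow_exp_neg_dotProduct_mulVec, hQ.integral_exp_neg_dotProduct_mulVec,
    (hAi _).integral_exp_neg_dotProduct_mulVec, Fintype.card_fin] at hBL
  rw [prod_rpow_rpow_div_sqrt two_pi_pos (fun i => (hAi i).det_pos.le) hdim] at hBL
  exact le_sq_mul_of_div_sqrt_le_mul_div_sqrt (rpow_pos_of_pos two_pi_pos _)
    (Finset.prod_pos fun i _ => rpow_pos_of_pos (hAi i).det_pos _) hQ.det_pos hBL

/-- **The Gaussian Brascamp–Lieb constant is at most the Brascamp–Lieb constant**
(inequality (9) of the paper). Applying the Brascamp–Lieb inequality to centered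
Gaussian functions `fᵢ(x) = exp(−⟨Aᵢx,x⟩/2)` yields
`∏ det(Aᵢ)^{cᵢ} ≤ C² det(∑ cᵢ Bᵢ* Aᵢ Bᵢ)` for all positive definite `Aᵢ`. -/
theorem gaussian_brascamp_lieb_of_brascamp_lieb
    (m n : ℕ) (ni : Fin m → ℕ) (c : Fin m → ℝ) (hc : ∀ i, 0 < c i)
    (B : ∀ i, Matrix (Fin (ni i)) (Fin n) ℝ)
    (hB : ∀ i, Function.Surjective (B i).mulVec)
    (hdim : ∑ i, c i * (ni i : ℝ) = (n : ℝ))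
    (hker : ∀ x : Fin n → ℝ, (∀ i, (B i).mulVec x = 0) → x = 0)
    (C : ℝ)
    (hC : ∀ f : ∀ i, (Fin (ni i) → ℝ) → ℝ,
      (∀ i x, 0 ≤ f i x) → (∀ i, Integrable (f i)) →
      ∫ x : Fin n → ℝ, ∏ i, (f i ((B i).mulVec x)) ^ (c i) ≤
        C * ∏ i, (∫ y : Fin (ni i) → ℝ, f i y) ^ (c i))
    (Ai : ∀ i, Matrix (Fin (ni i)) (Fin (ni i)) ℝ) (hAi : ∀ i, (Ai i).PosDef) :
    ∏ i, (Ai i).det ^ (c i) ≤ C ^ 2 * (∑ i, c i • ((B i)ᵀ * Ai i * B i)).det :=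
  gaussian_brascamp_lieb_of_brascamp_lieb_general m n ni c hc B hdim hker C hC Ai hAi
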